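/- arXiv:2303.03092 — 5 statements merged into one kernel-verified Lean document; each statement's English description precedes it below -/
import Mathlib

section
/- Let β* ∈ ℝ^p with support S*, σ² > 0, and let U be the set of probability distributions μ on ℝ^p × ℝ such that E_μ[y | x_{S*}] = (β*_{S*})ᵀ x_{S*} almost surely, Var_μ[y | x_{S*}] ≤ σ², and E_μ[x_j²] ≤ σ² for all j. Define the worst-case risk R(β) = sup_{μ ∈ U} E_μ[|y − βᵀx|²]. Then R(β*) = σ². -/
open MeasureTheory

/-- The sub-σ-algebra of `(Fin p → ℝ) × ℝ` generated by the coordinates of `x` indexed by `S`. -/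
noncomputable def coordMS (p : ℕ) (S : Set (Fin p)) : MeasurableSpace ((Fin p → ℝ) × ℝ) :=
  MeasurableSpace.comap (fun z : (Fin p → ℝ) × ℝ => fun j : S => z.1 j) inferInstance

/-- The family `U_{β*,σ²}` of distributions `μ` of `(x, y)` such that
`E_μ[y | x_{S*}] = (β*)ᵀ x` a.s., `Var_μ[y | x_{S*}] ≤ σ²` a.s. and `E_μ[x_j²] ≤ σ²`
for all `j`, where `S* = supp β*`. -/
noncomputable def Ufam (p : ℕ) (βs : Fin p → ℝ) (σ2 : ℝ) :
    Set (Measure ((Fin p → ℝ) × ℝ)) :=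
  {μ | IsProbabilityMeasure μ ∧
    (μ[(fun z : (Fin p → ℝ) × ℝ => z.2)|coordMS p {j | βs j ≠ 0}]
        =ᵐ[μ] fun z => ∑ j, βs j * z.1 j) ∧
    (μ[(fun z : (Fin p → ℝ) × ℝ => (z.2 - ∑ j, βs j * z.1 j) ^ 2)|coordMS p {j | βs j ≠ 0}]
        ≤ᵐ[μ] fun _ => σ2) ∧
    (∀ j, ∫ z, (z.1 j) ^ 2 ∂μ ≤ σ2)}

/-- The worst-case out-of-sample risk `R(β) = sup_{μ ∈ U} E_μ[|y − βᵀx|²]`. -/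
noncomputable def Roos (p : ℕ) (βs : Fin p → ℝ) (σ2 : ℝ) (β : Fin p → ℝ) : ℝ :=
  sSup ((fun μ => ∫ z, (z.2 - ∑ j, β j * z.1 j) ^ 2 ∂μ) '' Ufam p βs σ2)

section aux
open scoped ENNReal


lemma coordMS_le (p : ℕ) (S : Set (Fin p)) : coordMS p S ≤ Prod.instMeasurableSpace := by
  exact Measurable.comap_le (measurable_pi_lambda _ fun j =>
    (measurable_pi_apply (j : Fin p)).comp measurable_fst)

/-- `R(β*) = σ²`. -/
theorem stmt0 (p : ℕ) (βs : Fin p → ℝ) (σ2 : ℝ) (hσ : 0 < σ2) :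
    Roos p βs σ2 βs = σ2 := by
  set S : Set (Fin p) := {j | βs j ≠ 0}
  have hm : coordMS p S ≤ Prod.instMeasurableSpace := coordMS_le p S
  -- the witness measure
  set a : ℝ := Real.sqrt σ2 with ha
  have ha2 : a ^ 2 = σ2 := Real.sq_sqrt hσ.le
  set ν : Measure ℝ := (1/2 : ℝ≥0∞) • Measure.dirac a + (1/2 : ℝ≥0∞) • Measure.dirac (-a)
    with hν
  have hνint : ∀ f : ℝ → ℝ, Integrable f ν := by
    intro f
    exact (((integrable_const (f a)).congr (ae_eq_dirac f).symm).smul_measure (by norm_num)).add_measure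
      (((integrable_const (f (-a))).congr (ae_eq_dirac f).symm).smul_measure (by norm_num))
  have hνeq : ∀ f : ℝ → ℝ, ∫ y, f y ∂ν = (1/2) * f a + (1/2) * f (-a) := by
    intro f
    rw [hν, integral_add_measure (((integrable_const (f a)).congr (ae_eq_dirac f).symm).smul_measure (by norm_num))
        (((integrable_const (f (-a))).congr (ae_eq_dirac f).symm).smul_measure (by norm_num)),
      integral_smul_measure, integral_smul_measure, integral_dirac, integral_dirac]
    norm_num
  have hνprob : IsProbabilityMeasure ν := by
    constructor
    simp [hν]
    exact ENNReal.inv_two_add_inv_two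
  set i : ℝ → (Fin p → ℝ) × ℝ := fun y => ((0 : Fin p → ℝ), y) with hi
  have him : Measurable i := measurable_const.prodMk measurable_id
  set μ0 : Measure ((Fin p → ℝ) × ℝ) := ν.map i with hμ0
  haveI hμ0prob : IsProbabilityMeasure μ0 := Measure.isProbabilityMeasure_map him.aemeasurable
  have hπ : Measurable fun z : (Fin p → ℝ) × ℝ => fun j : S => z.1 j :=
    measurable_pi_lambda _ fun j => (measurable_pi_apply (j : Fin p)).comp measurable_fst
  have hmeas_sum : Measurable fun z : (Fin p → ℝ) × ℝ => ∑ j, βs j * z.1 j :=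
    Finset.measurable_sum _ fun j _ =>
      measurable_const.mul ((measurable_pi_apply j).comp measurable_fst)
  have hsf : ∀ (μ : Measure ((Fin p → ℝ) × ℝ)), IsProbabilityMeasure μ →
      SigmaFinite (μ.trim hm) := by
    intro μ hp
    haveI := hp
    haveI : IsFiniteMeasure (μ.trim hm) :=
      ⟨by rw [trim_measurableSet_eq hm (@MeasurableSet.univ _ (coordMS p S))]
          exact measure_lt_top μ _⟩
    infer_instance
  haveI := hsf μ0 hμ0prob
  -- a.e. the x-coordinate is zero
  have hx0 : (fun z : (Fin p → ℝ) × ℝ => ∑ j, βs j * z.1 j) =ᵐ[μ0] fun _ => (0:ℝ) := by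
    rw [hμ0, Filter.EventuallyEq]
    refine (MeasureTheory.ae_map_iff him.aemeasurable
      (measurableSet_eq_fun hmeas_sum measurable_const)).mpr ?_
    exact Filter.Eventually.of_forall fun y => by simp [hi]
  have hy_int : Integrable (fun z : (Fin p → ℝ) × ℝ => z.2) μ0 := by
    rw [hμ0, integrable_map_measure measurable_snd.aestronglyMeasurable him.aemeasurable]
    exact hνint _
  -- conditional expectation of y is 0
  have hce1 : (fun _ : (Fin p → ℝ) × ℝ => (0:ℝ))
      =ᵐ[μ0] μ0[(fun z : (Fin p → ℝ) × ℝ => z.2)|coordMS p S] := by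
    refine ae_eq_condExp_of_forall_setIntegral_eq hm hy_int
      (fun s _ _ => (integrable_zero _ _ _).integrableOn) (fun s hs hμs => ?_)
      (StronglyMeasurable.aestronglyMeasurable (@stronglyMeasurable_zero _ _ (coordMS p S) _ _))
    obtain ⟨B, hB, rfl⟩ := hs
    rw [integral_zero, hμ0,
      setIntegral_map (hπ hB) measurable_snd.aestronglyMeasurable him.aemeasurable]
    by_cases h0 : (fun j : S => ((0 : Fin p → ℝ) : Fin p → ℝ) (j : Fin p)) ∈ B
    · have : i ⁻¹' ((fun z : (Fin p → ℝ) × ℝ => fun j : S => z.1 j) ⁻¹' B) = Set.univ :=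
        Set.eq_univ_of_forall fun y => h0
      rw [this, Measure.restrict_univ]
      rw [hνeq (fun y => y)]
      ring
    · have : i ⁻¹' ((fun z : (Fin p → ℝ) × ℝ => fun j : S => z.1 j) ⁻¹' B) = ∅ :=
        Set.eq_empty_iff_forall_notMem.mpr fun y hy => h0 hy
      rw [this, Measure.restrict_empty, integral_zero_measure]
  have hUf1 : μ0[(fun z : (Fin p → ℝ) × ℝ => z.2)|coordMS p S]
      =ᵐ[μ0] fun z => ∑ j, βs j * z.1 j := hce1.symm.trans hx0.symm
  -- a.e. the residual squared equals σ2
  have hsq : (fun z : (Fin p → ℝ) × ℝ => (z.2 - ∑ j, βs j * z.1 j) ^ 2)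
      =ᵐ[μ0] fun _ => σ2 := by
    rw [hμ0, Filter.EventuallyEq]
    refine (MeasureTheory.ae_map_iff him.aemeasurable
      (measurableSet_eq_fun ((measurable_snd.sub hmeas_sum).pow_const 2)
        measurable_const)).mpr ?_
    have hae : ∀ᵐ y ∂ν, y ^ 2 = σ2 := by
      have hset : MeasurableSet {y : ℝ | ¬ y ^ 2 = σ2} :=
        (measurableSet_eq_fun (measurable_id.pow_const 2) measurable_const).compl
      rw [MeasureTheory.ae_iff, hν]
      have h1 : a ∉ {y : ℝ | ¬ y ^ 2 = σ2} := by simp [ha2]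
      have h2 : -a ∉ {y : ℝ | ¬ y ^ 2 = σ2} := by simp [neg_sq, ha2]
      simp [Measure.dirac_apply' _ hset, Set.indicator_of_notMem h1,
        Set.indicator_of_notMem h2]
    filter_upwards [hae] with y hy
    simp [hi, hy]
  have hUf2 : μ0[(fun z : (Fin p → ℝ) × ℝ => (z.2 - ∑ j, βs j * z.1 j) ^ 2)|coordMS p S]
      ≤ᵐ[μ0] fun _ => σ2 := by
    have h := condExp_congr_ae (μ := μ0) (m := coordMS p S) hsq
    rw [condExp_const hm] at h
    exact h.le
  have hxj : ∀ j, ∫ z, (z.1 j) ^ 2 ∂μ0 ≤ σ2 := by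
    intro j
    have hmj : Measurable fun z : (Fin p → ℝ) × ℝ => z.1 j ^ 2 :=
      ((measurable_pi_apply j).comp measurable_fst).pow_const 2
    rw [hμ0, integral_map him.aemeasurable hmj.aestronglyMeasurable]
    simpa [hi] using hσ.le
  have hmem : μ0 ∈ Ufam p βs σ2 := ⟨hμ0prob, hUf1, hUf2, hxj⟩
  -- risk of the witness
  have hrisk : ∫ z, (z.2 - ∑ j, βs j * z.1 j) ^ 2 ∂μ0 = σ2 := by
    rw [hμ0, integral_map him.aemeasurable
      (f := fun z : (Fin p → ℝ) × ℝ => (z.2 - ∑ j, βs j * z.1 j) ^ 2) ((measurable_snd.sub hmeas_sum).pow_const 2).aestronglyMeasurable]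
    have heq : (fun y : ℝ => ((i y).2 - ∑ j, βs j * (i y).1 j) ^ 2) = fun y : ℝ => y ^ 2 := by
      funext y; simp [hi]
    rw [heq, hνeq (fun y => y ^ 2), neg_sq]
    linarith
  -- upper bound
  have hub : ∀ r ∈ (fun μ => ∫ z, (z.2 - ∑ j, βs j * z.1 j) ^ 2 ∂μ) '' Ufam p βs σ2,
      r ≤ σ2 := by
    rintro r ⟨μ, ⟨hprob, _, hvar, _⟩, rfl⟩
    haveI := hprob
    haveI := hsf μ hprob
    by_cases hfint :
        Integrable (fun z : (Fin p → ℝ) × ℝ => (z.2 - ∑ j, βs j * z.1 j) ^ 2) μ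
    · calc ∫ z, (z.2 - ∑ j, βs j * z.1 j) ^ 2 ∂μ
          = ∫ z, (μ[(fun z : (Fin p → ℝ) × ℝ =>
              (z.2 - ∑ j, βs j * z.1 j) ^ 2)|coordMS p S]) z ∂μ := (integral_condExp hm).symm
        _ ≤ ∫ _, σ2 ∂μ := integral_mono_ae integrable_condExp (integrable_const _) hvar
        _ = σ2 := by simp
    · simp only [integral_undef hfint]
      exact hσ.le
  exact le_antisymm (csSup_le ⟨_, ⟨μ0, hmem, rfl⟩⟩ hub)
    (le_csSup ⟨σ2, fun r hr => hub r hr⟩ ⟨μ0, hmem, hrisk⟩)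


end aux
end

section
/- Strong convexity of the population EILLS objective (Theorem 1): under the multiple-environment linear model with κ_L I ⪯ Σ^(e) ⪯ κ_U I for all e ∈ E, and the identification condition that for every S ⊆ [p] with S ∩ G_ω ≠ ∅ there exist e, e' with β^(e,S) ≠ β^(e',S), the following holds: for any ε ∈ (0,1) and any γ ≥ ε⁻¹ γ* where γ* = κ_L⁻³ sup_{S : S∩G_ω ≠ ∅} (b_S / d̄_S), with b_S = ‖Σ_e ω^(e) E[ε^(e) x_S^(e)]‖₂² and d̄_S = Σ_e ω^(e) ‖β^(e,S) − β̄^(S)‖₂², we have for all β ∈ ℝ^p: Q(β; γ, ω) − Q(β*; γ, ω) ≥ (1 − ε) ‖Σ̄^{1/2}(β − β*)‖₂² + κ_L² (γ − ε⁻¹γ*) d̄_{supp(β)}. -/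
open MeasureTheory Matrix

lemma int_mul_L2 {α : Type*} [MeasurableSpace α] {μ : Measure α} {f g : α → ℝ}
    (hf : MemLp f 2 μ) (hg : MemLp g 2 μ) : Integrable (fun x => f x * g x) μ := by
  have h : MemLp (f • g) 1 μ := hg.smul hf
  rw [memLp_one_iff_integrable] at h
  simpa [Pi.smul_apply, smul_eq_mul, Pi.mul_def] using h

lemma memL2_lin {p : ℕ} {μ : Measure ((Fin p → ℝ) × ℝ)}
    (hx : ∀ i, MemLp (fun z : (Fin p → ℝ) × ℝ => z.1 i) 2 μ) (β : Fin p → ℝ) :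
    MemLp (fun z : (Fin p → ℝ) × ℝ => ∑ i, β i * z.1 i) 2 μ := by
  have := memLp_finset_sum' (μ := μ) (p := 2) Finset.univ
    (f := fun i (z : (Fin p → ℝ) × ℝ) => β i * z.1 i) (fun i _ => (hx i).const_mul (β i))
  convert this using 1
  funext z
  simp

lemma memL2_resid {p : ℕ} {μ : Measure ((Fin p → ℝ) × ℝ)}
    (hx : ∀ i, MemLp (fun z : (Fin p → ℝ) × ℝ => z.1 i) 2 μ)
    (hy : MemLp (fun z : (Fin p → ℝ) × ℝ => z.2) 2 μ) (β : Fin p → ℝ) :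
    MemLp (fun z : (Fin p → ℝ) × ℝ => z.2 - ∑ i, β i * z.1 i) 2 μ :=
  hy.sub (memL2_lin hx β)

section exp
variable {p : ℕ} {μ : Measure ((Fin p → ℝ) × ℝ)}
  (hx : ∀ i, MemLp (fun z : (Fin p → ℝ) × ℝ => z.1 i) 2 μ)
  (hy : MemLp (fun z : (Fin p → ℝ) × ℝ => z.2) 2 μ)

include hx hy

lemma cdiff (β β' : Fin p → ℝ) (j : Fin p) :
    ∫ z, (z.2 - ∑ i, β' i * z.1 i) * z.1 j ∂μ
      = (∫ z, (z.2 - ∑ i, β i * z.1 i) * z.1 j ∂μ)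
        - ∑ i, (β' i - β i) * ∫ z, z.1 i * z.1 j ∂μ := by
  have hkey : (fun z : (Fin p → ℝ) × ℝ => (z.2 - ∑ i, β' i * z.1 i) * z.1 j)
      = fun z => (z.2 - ∑ i, β i * z.1 i) * z.1 j
          - ∑ i, (β' i - β i) * (z.1 i * z.1 j) := by
    funext z
    have h1 : ∑ i, (β' i - β i) * (z.1 i * z.1 j)
        = ((∑ i, β' i * z.1 i) - ∑ i, β i * z.1 i) * z.1 j := by
      rw [← Finset.sum_sub_distrib, Finset.sum_mul]
      exact Finset.sum_congr rfl fun i _ => by ring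
    rw [h1]; ring
  rw [hkey, integral_sub (int_mul_L2 (memL2_resid hx hy β) (hx j))
    (integrable_finset_sum _ fun i _ =>
      ((int_mul_L2 (hx i) (hx j)).const_mul (β' i - β i)))]
  rw [integral_finset_sum _ fun i _ =>
      ((int_mul_L2 (hx i) (hx j)).const_mul (β' i - β i))]
  congr 1
  exact Finset.sum_congr rfl fun i _ => integral_const_mul _ _

lemma Rdiff (β β' : Fin p → ℝ) :
    ∫ z, (z.2 - ∑ i, β' i * z.1 i) ^ 2 ∂μ
      = (∫ z, (z.2 - ∑ i, β i * z.1 i) ^ 2 ∂μ)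
        - 2 * ∑ j, (β' j - β j) * ∫ z, (z.2 - ∑ i, β i * z.1 i) * z.1 j ∂μ
        + ∑ i, ∑ j, (β' i - β i) * ((β' j - β j) * ∫ z, z.1 i * z.1 j ∂μ) := by
  set d : Fin p → ℝ := fun i => β' i - β i with hd
  have hres : MemLp (fun z : (Fin p → ℝ) × ℝ => z.2 - ∑ i, β i * z.1 i) 2 μ :=
    memL2_resid hx hy β
  have hD : MemLp (fun z : (Fin p → ℝ) × ℝ => ∑ i, d i * z.1 i) 2 μ := memL2_lin hx d
  have hkey : (fun z : (Fin p → ℝ) × ℝ => (z.2 - ∑ i, β' i * z.1 i) ^ 2)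
      = fun z => (z.2 - ∑ i, β i * z.1 i) ^ 2
          - 2 * ((z.2 - ∑ i, β i * z.1 i) * (∑ i, d i * z.1 i))
          + (∑ i, d i * z.1 i) * (∑ i, d i * z.1 i) := by
    funext z
    have h1 : ∑ i, β' i * z.1 i = (∑ i, β i * z.1 i) + ∑ i, d i * z.1 i := by
      rw [← Finset.sum_add_distrib]
      exact Finset.sum_congr rfl fun i _ => by rw [hd]; ring
    rw [h1]; ring
  have i1 : Integrable (fun z : (Fin p → ℝ) × ℝ => (z.2 - ∑ i, β i * z.1 i) ^ 2) μ := by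
    have := int_mul_L2 hres hres
    simpa [pow_two] using this
  have i2 : Integrable (fun z : (Fin p → ℝ) × ℝ =>
      (z.2 - ∑ i, β i * z.1 i) * (∑ i, d i * z.1 i)) μ := int_mul_L2 hres hD
  have i3 : Integrable (fun z : (Fin p → ℝ) × ℝ =>
      (∑ i, d i * z.1 i) * (∑ i, d i * z.1 i)) μ := int_mul_L2 hD hD
  rw [hkey, integral_add (f := fun z : (Fin p → ℝ) × ℝ =>
      (z.2 - ∑ i, β i * z.1 i) ^ 2
        - 2 * ((z.2 - ∑ i, β i * z.1 i) * (∑ i, d i * z.1 i)))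
    (g := fun z : (Fin p → ℝ) × ℝ => (∑ i, d i * z.1 i) * (∑ i, d i * z.1 i))
    (by exact i1.sub (i2.const_mul 2)) i3,
    integral_sub (f := fun z : (Fin p → ℝ) × ℝ => (z.2 - ∑ i, β i * z.1 i) ^ 2)
      (g := fun z : (Fin p → ℝ) × ℝ =>
        2 * ((z.2 - ∑ i, β i * z.1 i) * (∑ i, d i * z.1 i)))
      i1 (by exact i2.const_mul 2), integral_const_mul]
  congr 1
  · congr 1
    congr 1
    -- ∫ resid * D = ∑ j, d j * ∫ resid * x j
    have h2 : (fun z : (Fin p → ℝ) × ℝ => (z.2 - ∑ i, β i * z.1 i) * (∑ i, d i * z.1 i))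
        = fun z => ∑ j, d j * ((z.2 - ∑ i, β i * z.1 i) * z.1 j) := by
      funext z
      rw [Finset.mul_sum]
      exact Finset.sum_congr rfl fun jj _ => by ring
    rw [h2, integral_finset_sum _ fun jj _ =>
      ((int_mul_L2 hres (hx jj)).const_mul (d jj))]
    exact Finset.sum_congr rfl fun jj _ => integral_const_mul _ _
  · -- ∫ D * D = ∑ i, ∑ j, d i * (d j * ∫ x i * x j)
    have h3 : (fun z : (Fin p → ℝ) × ℝ => (∑ i, d i * z.1 i) * (∑ i, d i * z.1 i))
        = fun z => ∑ i, ∑ j, d i * (d j * (z.1 i * z.1 j)) := by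
      funext z
      rw [Finset.sum_mul_sum]
      exact Finset.sum_congr rfl fun i _ => Finset.sum_congr rfl fun j _ => by ring
    rw [h3, integral_finset_sum _ fun i _ => integrable_finset_sum _ fun j _ =>
      ((int_mul_L2 (hx i) (hx j)).const_mul (d j)).const_mul (d i)]
    refine Finset.sum_congr rfl fun i _ => ?_
    rw [integral_finset_sum _ fun j _ =>
      ((int_mul_L2 (hx i) (hx j)).const_mul (d j)).const_mul (d i)]
    refine Finset.sum_congr rfl fun j _ => ?_
    rw [integral_const_mul, integral_const_mul]

end exp

section foc
variable {p : ℕ} {μ : Measure ((Fin p → ℝ) × ℝ)}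
  (hx : ∀ i, MemLp (fun z : (Fin p → ℝ) × ℝ => z.1 i) 2 μ)
  (hy : MemLp (fun z : (Fin p → ℝ) × ℝ => z.2) 2 μ)

include hx hy

/-- First-order condition for the constrained least squares solution. -/
lemma foc {κL : ℝ} (hκL : 0 < κL)
    (hdiag : ∀ j : Fin p, κL ≤ ∫ z, z.1 j * z.1 j ∂μ)
    (S : Finset (Fin p)) (βE : Fin p → ℝ) (hsupp : ∀ j, j ∉ S → βE j = 0)
    (hmin : ∀ b : Fin p → ℝ, (∀ j, j ∉ S → b j = 0) →
      (∫ z, (z.2 - ∑ i, βE i * z.1 i) ^ 2 ∂μ) ≤ ∫ z, (z.2 - ∑ i, b i * z.1 i) ^ 2 ∂μ)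
    {j : Fin p} (hj : j ∈ S) :
    ∫ z, (z.2 - ∑ i, βE i * z.1 i) * z.1 j ∂μ = 0 := by
  set c : ℝ := ∫ z, (z.2 - ∑ i, βE i * z.1 i) * z.1 j ∂μ with hc
  set Sjj : ℝ := ∫ z, z.1 j * z.1 j ∂μ with hSjj
  have hSpos : 0 < Sjj := lt_of_lt_of_le hκL (hdiag j)
  set t : ℝ := c / Sjj with ht
  set b : Fin p → ℝ := fun i => βE i + (if i = j then t else 0) with hb
  have hbsupp : ∀ i, i ∉ S → b i = 0 := by
    intro i hi
    have h1 : i ≠ j := fun h => hi (h ▸ hj)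
    simp [hb, hsupp i hi, h1]
  have hR := Rdiff hx hy βE b
  have hd : ∀ i, b i - βE i = if i = j then t else 0 := fun i => by simp [hb]
  have hs1 : ∑ j', (b j' - βE j') * ∫ z, (z.2 - ∑ i, βE i * z.1 i) * z.1 j' ∂μ = t * c := by
    simp_rw [hd]
    rw [Finset.sum_eq_single j]
    · simp [hc]
    · intro i _ hij; simp [hij]
    · intro h; exact absurd (Finset.mem_univ j) h
  have hs2 : ∑ i, ∑ j', (b i - βE i) * ((b j' - βE j') * ∫ z, z.1 i * z.1 j' ∂μ)
      = t * (t * Sjj) := by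
    simp_rw [hd]
    rw [Finset.sum_eq_single j]
    · rw [Finset.sum_eq_single j]
      · simp [hSjj]
      · intro i _ hij; simp [hij]
      · intro h; exact absurd (Finset.mem_univ j) h
    · intro i _ hij
      simp [hij]
    · intro h; exact absurd (Finset.mem_univ j) h
  have hmin' := hmin b hbsupp
  rw [hR, hs1, hs2] at hmin'
  -- hmin' : R ≤ R - 2*(t*c) + t*(t*Sjj), t = c/Sjj
  have h2 : t * c = c ^ 2 / Sjj := by rw [ht]; ring
  have h3 : t * (t * Sjj) = c ^ 2 / Sjj := by
    rw [ht]; field_simp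
  rw [h2, h3] at hmin'
  have h4 : c ^ 2 / Sjj ≤ 0 := by linarith
  have h5 : c ^ 2 ≤ 0 := by
    by_contra h
    push_neg at h
    exact absurd (div_pos h hSpos) (not_lt.2 h4)
  have := sq_nonneg c
  have : c ^ 2 = 0 := le_antisymm h5 this
  exact pow_eq_zero_iff (n := 2) (by norm_num) |>.mp this

end foc

section linalg
variable {p : ℕ}

lemma psd_lower {κL : ℝ} {M : Matrix (Fin p) (Fin p) ℝ}
    (h : (M - κL • 1).PosSemidef) (v : Fin p → ℝ) :
    κL * ∑ j, v j ^ 2 ≤ v ⬝ᵥ (M *ᵥ v) := by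
  have h2 := h.dotProduct_mulVec_nonneg v
  simp only [sub_mulVec, dotProduct_sub, smul_mulVec, one_mulVec,
    dotProduct_smul, smul_eq_mul, star_trivial] at h2
  have h3 : v ⬝ᵥ v = ∑ j, v j ^ 2 := by
    simp [dotProduct, pow_two]
  rw [h3] at h2
  linarith

lemma diag_lower {κL : ℝ} {M : Matrix (Fin p) (Fin p) ℝ}
    (h : (M - κL • 1).PosSemidef) (j : Fin p) : κL ≤ M j j := by
  have := psd_lower h (Pi.single j 1)
  have h1 : ∑ i, Pi.single j 1 i ^ 2 = (1 : ℝ) := by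
    rw [Finset.sum_eq_single j]
    · simp
    · intro i _ hij; simp [Pi.single_apply, hij]
    · intro h; exact absurd (Finset.mem_univ j) h
  have h2 : (Pi.single j 1 : Fin p → ℝ) ⬝ᵥ (M *ᵥ Pi.single j 1) = M j j := by
    simp [dotProduct, mulVec, Pi.single_apply]
  rw [h1, h2] at this
  linarith

lemma dot_eq (M : Matrix (Fin p) (Fin p) ℝ) (v : Fin p → ℝ) :
    v ⬝ᵥ (M *ᵥ v) = ∑ i, ∑ j, v i * (v j * M i j) := by
  simp only [dotProduct, mulVec, Finset.mul_sum]
  exact Finset.sum_congr rfl fun i _ => Finset.sum_congr rfl fun j _ => by ring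

/-- Restricted Cauchy–Schwarz penalty bound. -/
lemma pen {κL : ℝ} (hκL : 0 < κL) {M : Matrix (Fin p) (Fin p) ℝ}
    {u : Fin p → ℝ} (hpsd : κL * ∑ j, u j ^ 2 ≤ u ⬝ᵥ (M *ᵥ u))
    (S : Finset (Fin p)) (hsupp : ∀ j, j ∉ S → u j = 0) :
    κL ^ 2 * ∑ j, u j ^ 2 ≤ ∑ j ∈ S, ((M *ᵥ u) j) ^ 2 := by
  set N : ℝ := ∑ j, u j ^ 2 with hN
  set T : ℝ := ∑ j ∈ S, ((M *ᵥ u) j) ^ 2 with hT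
  have hTnn : 0 ≤ T := Finset.sum_nonneg fun j _ => sq_nonneg _
  have hNnn : 0 ≤ N := Finset.sum_nonneg fun j _ => sq_nonneg _
  have hNS : ∑ j ∈ S, u j ^ 2 = N := by
    rw [hN]
    exact Finset.sum_subset (Finset.subset_univ S)
      (fun j _ hj => by rw [hsupp j hj]; ring)
  have ha : u ⬝ᵥ (M *ᵥ u) = ∑ j ∈ S, u j * (M *ᵥ u) j := by
    rw [dotProduct]
    exact (Finset.sum_subset (Finset.subset_univ S)
      (fun j _ hj => by rw [hsupp j hj]; ring)).symm
  have hcs := Finset.sum_mul_sq_le_sq_mul_sq S u (fun j => (M *ᵥ u) j)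
  rw [hNS] at hcs
  rw [ha] at hpsd
  rcases eq_or_lt_of_le hNnn with h0 | h0
  · rw [← h0]
    simpa using hTnn
  · have hann : (0:ℝ) ≤ ∑ j ∈ S, u j * (M *ᵥ u) j :=
      le_trans (by positivity) hpsd
    have h1 : (κL * N) ^ 2 ≤ (∑ j ∈ S, u j * (M *ᵥ u) j) ^ 2 := by
      rw [sq, sq]
      exact mul_self_le_mul_self (by positivity) hpsd
    nlinarith [h1, hcs, h0]

/-- Variance decomposition: the weighted mean minimizes weighted squared distance. -/
lemma var_min {ι : Type} [Fintype ι] (ω : ι → ℝ) (hω : ∀ e, 0 ≤ ω e)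
    (hωsum : ∑ e, ω e = 1) (v : ι → ℝ) (c : ℝ) :
    ∑ e, ω e * (v e - ∑ e', ω e' * v e') ^ 2 ≤ ∑ e, ω e * (v e - c) ^ 2 := by
  set m : ℝ := ∑ e', ω e' * v e' with hm
  have h2 : ∑ e, ω e * (v e - c) ^ 2 - ∑ e, ω e * (v e - m) ^ 2 = (m - c) ^ 2 := by
    rw [← Finset.sum_sub_distrib]
    have hcong : ∀ e ∈ Finset.univ, ω e * (v e - c) ^ 2 - ω e * (v e - m) ^ 2
        = (2 * m - 2 * c) * (ω e * v e) - ((m - c) * (c + m)) * ω e :=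
      fun e _ => by ring
    rw [Finset.sum_congr rfl hcong, Finset.sum_sub_distrib, ← Finset.mul_sum,
      ← Finset.mul_sum, ← hm, hωsum]
    ring
  nlinarith [sq_nonneg (m - c)]

end linalg

section misc
variable {ι : Type} [Fintype ι] {p : ℕ}

lemma swap_sum (ω : ι → ℝ) (g : Fin p → ℝ) (f : ι → Fin p → ℝ) :
    ∑ e, ω e * ∑ j, g j * f e j = ∑ j, g j * ∑ e, ω e * f e j := by
  simp_rw [Finset.mul_sum]
  rw [Finset.sum_comm]
  exact Finset.sum_congr rfl fun j _ =>
    Finset.sum_congr rfl fun e _ => by ring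

lemma swap_sum' (ω : ι → ℝ) (f : ι → Fin p → ℝ) :
    ∑ e, ω e * ∑ j, f e j = ∑ j, ∑ e, ω e * f e j := by
  simp_rw [Finset.mul_sum]
  exact Finset.sum_comm

lemma dot_bar (ω : ι → ℝ) (Sge : ι → Matrix (Fin p) (Fin p) ℝ) (v : Fin p → ℝ) :
    ∑ e, ω e * (v ⬝ᵥ (Sge e *ᵥ v)) = v ⬝ᵥ ((∑ e, ω e • Sge e) *ᵥ v) := by
  simp_rw [dot_eq, Matrix.sum_apply, Matrix.smul_apply, smul_eq_mul, Finset.mul_sum]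
  calc ∑ e, ∑ i, ∑ j, ω e * (v i * (v j * Sge e i j))
      = ∑ i, ∑ e, ∑ j, ω e * (v i * (v j * Sge e i j)) := Finset.sum_comm
    _ = ∑ i, ∑ j, ∑ e, ω e * (v i * (v j * Sge e i j)) :=
        Finset.sum_congr rfl fun i _ => Finset.sum_comm
    _ = ∑ i, ∑ j, ∑ e, v i * (v j * (ω e * Sge e i j)) :=
        Finset.sum_congr rfl fun i _ => Finset.sum_congr rfl fun j _ =>
          Finset.sum_congr rfl fun e _ => by ring

end misc

/-- **Strong convexity of the population EILLS objective (Theorem 1).**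
In the multiple-environment linear model with `κ_L I ⪯ Σ⁽ᵉ⁾ ⪯ κ_U I`, under the
identification condition (every variable set meeting the pooled spurious set `G_ω` yields
two environments with different constrained least-squares solutions), for any `ε ∈ (0,1)`
and any `γ ≥ ε⁻¹γ*` with `γ* = κ_L⁻³ sup_{S∩G_ω≠∅} b_S/d̄_S`, the population EILLS
objective satisfies, for all `β`:
`Q(β;γ,ω) − Q(β*;γ,ω) ≥ (1−ε)‖Σ̄^{1/2}(β−β*)‖₂² + κ_L²(γ − ε⁻¹γ*) d̄_{supp β}`. -/
theorem stmt10
    (p : ℕ) (ι : Type) [Fintype ι]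
    (ω : ι → ℝ) (hω : ∀ e, 0 < ω e) (hωsum : ∑ e, ω e = 1)
    (μ : ι → Measure ((Fin p → ℝ) × ℝ)) (hprob : ∀ e, IsProbabilityMeasure (μ e))
    (hL2x : ∀ e i, MemLp (fun z : (Fin p → ℝ) × ℝ => z.1 i) 2 (μ e))
    (hL2y : ∀ e, MemLp (fun z : (Fin p → ℝ) × ℝ => z.2) 2 (μ e))
    (βs : Fin p → ℝ)
    -- the model: `E[ε⁽ᵉ⁾ x_{S*}⁽ᵉ⁾] = 0` for every environment
    (hmodel : ∀ e j, βs j ≠ 0 → ∫ z, (z.2 - ∑ i, βs i * z.1 i) * z.1 j ∂(μ e) = 0)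
    (κL κU : ℝ) (hκL : 0 < κL) (hκLU : κL ≤ κU)
    (Sge : ι → Matrix (Fin p) (Fin p) ℝ)
    (hSge : ∀ e i j, Sge e i j = ∫ z, z.1 i * z.1 j ∂(μ e))
    (hlow : ∀ e, (Sge e - κL • 1).PosSemidef)
    (hup : ∀ e, ((κU • 1 : Matrix (Fin p) (Fin p) ℝ) - Sge e).PosSemidef)
    (Sgbar : Matrix (Fin p) (Fin p) ℝ) (hSgbar : Sgbar = ∑ e, ω e • Sge e)
    -- per-environment population risks
    (Re : ι → (Fin p → ℝ) → ℝ)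
    (hRe : ∀ e β, Re e β = ∫ z, (z.2 - ∑ i, β i * z.1 i) ^ 2 ∂(μ e))
    -- constrained population least squares `β^{(e,S)}`
    (βES : ι → Finset (Fin p) → (Fin p → ℝ))
    (hES0 : ∀ e S j, j ∉ S → βES e S j = 0)
    (hESmin : ∀ e S β, (∀ j, j ∉ S → β j = 0) → Re e (βES e S) ≤ Re e β)
    -- pooled linear spurious variables
    (Gω : Finset (Fin p))
    (hG : ∀ j, j ∈ Gω ↔ (∑ e, ω e * ∫ z, (z.2 - ∑ i, βs i * z.1 i) * z.1 j ∂(μ e)) ≠ 0)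
    -- bias and heterogeneity functionals
    (bS dS : Finset (Fin p) → ℝ)
    (hbS : ∀ S, bS S = ∑ j ∈ S,
      (∑ e, ω e * ∫ z, (z.2 - ∑ i, βs i * z.1 i) * z.1 j ∂(μ e)) ^ 2)
    (hdS : ∀ S, dS S = ∑ e, ω e * ∑ j, (βES e S j - ∑ e', ω e' * βES e' S j) ^ 2)
    -- identification condition
    (hident : ∀ S : Finset (Fin p), (S ∩ Gω).Nonempty → ∃ e e', βES e S ≠ βES e' S)
    -- EILLS population objective `Q(β; γ, ω) = R_𝓔(β) + γ J(β)`
    (J : (Fin p → ℝ) → ℝ)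
    (hJ : ∀ β, J β = ∑ j, (if β j ≠ 0 then
        ∑ e, ω e * (∫ z, (z.2 - ∑ i, β i * z.1 i) * z.1 j ∂(μ e)) ^ 2 else 0))
    (Q : (Fin p → ℝ) → ℝ → ℝ)
    (hQ : ∀ β γ, Q β γ = (∑ e, ω e * Re e β) + γ * J β)
    -- the critical threshold `γ*`
    (γstar : ℝ)
    (hγstar : γstar = (κL ^ 3)⁻¹ *
      sSup ((fun S => bS S / dS S) '' {S : Finset (Fin p) | (S ∩ Gω).Nonempty}))
    (ε γ : ℝ) (hε0 : 0 < ε) (hε1 : ε < 1) (hγ : ε⁻¹ * γstar ≤ γ) :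
    ∀ β : Fin p → ℝ,
      (1 - ε) * ((β - βs) ⬝ᵥ (Sgbar *ᵥ (β - βs))) +
          κL ^ 2 * (γ - ε⁻¹ * γstar) * dS (Finset.univ.filter fun j => β j ≠ 0)
        ≤ Q β γ - Q βs γ := by
  classical
  intro β
  set S : Finset (Fin p) := Finset.univ.filter (fun j => β j ≠ 0) with hSdef
  have hSmem : ∀ j, j ∈ S ↔ β j ≠ 0 := fun j => by simp [hSdef]
  have hωnn : ∀ e, 0 ≤ ω e := fun e => (hω e).le
  set q : ℝ := (β - βs) ⬝ᵥ (Sgbar *ᵥ (β - βs)) with hqdef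
  set eb : Fin p → ℝ :=
    fun j => ∑ e, ω e * ∫ z, (z.2 - ∑ i, βs i * z.1 i) * z.1 j ∂(μ e) with heb
  -- nonnegativity of dS and bS
  have hdSnn : ∀ S', 0 ≤ dS S' := fun S' => by
    rw [hdS]
    exact Finset.sum_nonneg fun e _ => mul_nonneg (hωnn e)
      (Finset.sum_nonneg fun j _ => sq_nonneg _)
  have hbSnn : ∀ S', 0 ≤ bS S' := fun S' => by
    rw [hbS]; exact Finset.sum_nonneg fun j _ => sq_nonneg _
  -- γstar is nonnegative
  have hγsnn : 0 ≤ γstar := by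
    rw [hγstar]
    refine mul_nonneg (inv_nonneg.2 (by positivity)) (Real.sSup_nonneg ?_)
    rintro x ⟨S', _, rfl⟩
    exact div_nonneg (hbSnn S') (hdSnn S')
  have hγpos : 0 ≤ γ :=
    le_trans (mul_nonneg (inv_nonneg.2 hε0.le) hγsnn) hγ
  -- pooled risk expansion
  have hpool : ∑ e, ω e * Re e β - ∑ e, ω e * Re e βs
      = q - 2 * ∑ j, (β j - βs j) * eb j := by
    have he : ∀ e, Re e β = Re e βs
        - 2 * ∑ j, (β j - βs j) * (∫ z, (z.2 - ∑ i, βs i * z.1 i) * z.1 j ∂(μ e))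
        + (β - βs) ⬝ᵥ (Sge e *ᵥ (β - βs)) := by
      intro e
      rw [hRe e β, hRe e βs, Rdiff (hL2x e) (hL2y e) βs β, dot_eq]
      simp only [Pi.sub_apply, hSge]
    have h2 : ∑ e, ω e * ((β - βs) ⬝ᵥ (Sge e *ᵥ (β - βs))) = q := by
      rw [hqdef, hSgbar]
      exact dot_bar ω Sge (β - βs)
    have h3 : ∑ e, ω e * ∑ j, (β j - βs j) *
        (∫ z, (z.2 - ∑ i, βs i * z.1 i) * z.1 j ∂(μ e)) = ∑ j, (β j - βs j) * eb j := by
      simp only [heb]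
      exact swap_sum ω _ _
    have h1 : ∑ e, ω e * Re e β
        = ∑ e, (ω e * Re e βs
            - 2 * (ω e * ∑ j, (β j - βs j) *
                (∫ z, (z.2 - ∑ i, βs i * z.1 i) * z.1 j ∂(μ e)))
            + ω e * ((β - βs) ⬝ᵥ (Sge e *ᵥ (β - βs)))) :=
      Finset.sum_congr rfl fun e _ => by rw [he e]; ring
    rw [h1, Finset.sum_add_distrib, Finset.sum_sub_distrib, h2, ← Finset.mul_sum, h3]
    ring
  -- J at the true parameter vanishes
  have hJβs : J βs = 0 := by
    rw [hJ]
    refine Finset.sum_eq_zero fun j _ => ?_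
    by_cases h : βs j ≠ 0
    · rw [if_pos h]
      exact Finset.sum_eq_zero fun e _ => by rw [hmodel e j h]; ring
    · rw [if_neg h]
  -- penalty lower bound
  have hJβ : κL ^ 2 * dS S ≤ J β := by
    have hdiag : ∀ e (j : Fin p), κL ≤ ∫ z, z.1 j * z.1 j ∂(μ e) := fun e j => by
      have h := diag_lower (hlow e) j
      rwa [hSge] at h
    have hfoc : ∀ e, ∀ j ∈ S,
        ∫ z, (z.2 - ∑ i, βES e S i * z.1 i) * z.1 j ∂(μ e) = 0 := by
      intro e j hj
      refine foc (hL2x e) (hL2y e) hκL (hdiag e) S (βES e S) (hES0 e S) ?_ hj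
      intro b hb
      have h := hESmin e S b hb
      rwa [hRe e (βES e S), hRe e b] at h
    have hcval : ∀ e, ∀ j ∈ S, ∫ z, (z.2 - ∑ i, β i * z.1 i) * z.1 j ∂(μ e)
        = (Sge e *ᵥ (βES e S - β)) j := by
      intro e j hj
      have hc := cdiff (hL2x e) (hL2y e) β (βES e S) j
      rw [hfoc e j hj] at hc
      have hsym : ∀ i : Fin p, (∫ z, z.1 i * z.1 j ∂(μ e)) = Sge e j i := by
        intro i
        rw [hSge e j i]
        congr 1
        funext z
        ring
      have hc2 : ∫ z, (z.2 - ∑ i, β i * z.1 i) * z.1 j ∂(μ e)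
          = ∑ i, (βES e S i - β i) * ∫ z, z.1 i * z.1 j ∂(μ e) := by linarith
      rw [hc2]
      simp only [mulVec, dotProduct, Pi.sub_apply]
      exact Finset.sum_congr rfl fun i _ => by rw [hsym i]; ring
    have hper : ∀ e, κL ^ 2 * ∑ j, (βES e S j - β j) ^ 2
        ≤ ∑ j ∈ S, (∫ z, (z.2 - ∑ i, β i * z.1 i) * z.1 j ∂(μ e)) ^ 2 := by
      intro e
      have hsupp : ∀ j, j ∉ S → (βES e S - β) j = 0 := by
        intro j hj
        have hb0 : β j = 0 := by_contra fun h => hj ((hSmem j).2 h)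
        simp [Pi.sub_apply, hES0 e S j hj, hb0]
      have hp := pen hκL (psd_lower (hlow e) (βES e S - β)) S hsupp
      calc κL ^ 2 * ∑ j, (βES e S j - β j) ^ 2
          = κL ^ 2 * ∑ j, ((βES e S - β) j) ^ 2 := by simp [Pi.sub_apply]
        _ ≤ ∑ j ∈ S, ((Sge e *ᵥ (βES e S - β)) j) ^ 2 := hp
        _ = ∑ j ∈ S, (∫ z, (z.2 - ∑ i, β i * z.1 i) * z.1 j ∂(μ e)) ^ 2 :=
            (Finset.sum_congr rfl fun j hj => by rw [hcval e j hj]).symm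
    have hJeq : J β
        = ∑ e, ω e * ∑ j ∈ S, (∫ z, (z.2 - ∑ i, β i * z.1 i) * z.1 j ∂(μ e)) ^ 2 := by
      rw [hJ, ← Finset.sum_filter, ← hSdef, Finset.sum_comm]
      exact Finset.sum_congr rfl fun e _ => (Finset.mul_sum _ _ _).symm
    have hvar : dS S ≤ ∑ e, ω e * ∑ j, (βES e S j - β j) ^ 2 := by
      rw [hdS, swap_sum' ω, swap_sum' ω]
      exact Finset.sum_le_sum fun j _ =>
        var_min ω hωnn hωsum (fun e => βES e S j) (β j)
    rw [hJeq]
    calc κL ^ 2 * dS S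
        ≤ κL ^ 2 * ∑ e, ω e * ∑ j, (βES e S j - β j) ^ 2 :=
          mul_le_mul_of_nonneg_left hvar (by positivity)
      _ = ∑ e, ω e * (κL ^ 2 * ∑ j, (βES e S j - β j) ^ 2) := by
          rw [Finset.mul_sum]
          exact Finset.sum_congr rfl fun e _ => by ring
      _ ≤ ∑ e, ω e * ∑ j ∈ S, (∫ z, (z.2 - ∑ i, β i * z.1 i) * z.1 j ∂(μ e)) ^ 2 :=
          Finset.sum_le_sum fun e _ =>
            mul_le_mul_of_nonneg_left (hper e) (hωnn e)
  -- cross term bound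
  have hX : 2 * ∑ j, (β j - βs j) * eb j ≤ ε * q + ε⁻¹ * κL⁻¹ * bS S := by
    have hXS : ∑ j, (β j - βs j) * eb j = ∑ j ∈ S, (β j - βs j) * eb j := by
      symm
      refine Finset.sum_subset (Finset.subset_univ S) ?_
      intro j _ hj
      have hb0 : β j = 0 := by_contra fun h => hj ((hSmem j).2 h)
      rcases eq_or_ne (βs j) 0 with h | h
      · rw [hb0, h]; ring
      · have h0 : eb j = 0 := by
          simp only [heb]
          exact Finset.sum_eq_zero fun e _ => by rw [hmodel e j h]; ring
        rw [h0]; ring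
    have hterm : ∀ j, 2 * ((β j - βs j) * eb j)
        ≤ ε * κL * (β j - βs j) ^ 2 + ε⁻¹ * κL⁻¹ * (eb j) ^ 2 := by
      intro j
      have hid : (ε * κL) * (ε⁻¹ * κL⁻¹) = 1 := by field_simp
      nlinarith [sq_nonneg (ε * κL * (β j - βs j) - eb j), mul_pos hε0 hκL, hid,
        sq_nonneg (eb j)]
    have hsum : 2 * ∑ j ∈ S, (β j - βs j) * eb j
        ≤ ε * κL * ∑ j ∈ S, (β j - βs j) ^ 2 + ε⁻¹ * κL⁻¹ * ∑ j ∈ S, (eb j) ^ 2 := by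
      rw [Finset.mul_sum, Finset.mul_sum, Finset.mul_sum, ← Finset.sum_add_distrib]
      exact Finset.sum_le_sum fun j _ => hterm j
    have hebS : ∑ j ∈ S, (eb j) ^ 2 = bS S := by
      rw [hbS]
    have hδq : κL * ∑ j, (β j - βs j) ^ 2 ≤ q := by
      have h1 : ∀ e, κL * ∑ j, (β j - βs j) ^ 2
          ≤ (β - βs) ⬝ᵥ (Sge e *ᵥ (β - βs)) := by
        intro e
        have h := psd_lower (hlow e) (β - βs)
        simpa [Pi.sub_apply] using h
      calc κL * ∑ j, (β j - βs j) ^ 2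
          = ∑ e, ω e * (κL * ∑ j, (β j - βs j) ^ 2) := by
            rw [← Finset.sum_mul, hωsum, one_mul]
        _ ≤ ∑ e, ω e * ((β - βs) ⬝ᵥ (Sge e *ᵥ (β - βs))) :=
            Finset.sum_le_sum fun e _ => mul_le_mul_of_nonneg_left (h1 e) (hωnn e)
        _ = q := by rw [hqdef, hSgbar]; exact dot_bar ω Sge (β - βs)
    have hSsub : ∑ j ∈ S, (β j - βs j) ^ 2 ≤ ∑ j, (β j - βs j) ^ 2 :=
      Finset.sum_le_sum_of_subset_of_nonneg (Finset.subset_univ S)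
        (fun j _ _ => sq_nonneg _)
    have hεq : ε * κL * ∑ j ∈ S, (β j - βs j) ^ 2 ≤ ε * q := by
      have h2 : κL * ∑ j ∈ S, (β j - βs j) ^ 2 ≤ q :=
        le_trans (mul_le_mul_of_nonneg_left hSsub hκL.le) hδq
      calc ε * κL * ∑ j ∈ S, (β j - βs j) ^ 2
          = ε * (κL * ∑ j ∈ S, (β j - βs j) ^ 2) := by ring
        _ ≤ ε * q := mul_le_mul_of_nonneg_left h2 hε0.le
    calc 2 * ∑ j, (β j - βs j) * eb j
        = 2 * ∑ j ∈ S, (β j - βs j) * eb j := by rw [hXS]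
      _ ≤ ε * κL * ∑ j ∈ S, (β j - βs j) ^ 2 + ε⁻¹ * κL⁻¹ * ∑ j ∈ S, (eb j) ^ 2 := hsum
      _ ≤ ε * q + ε⁻¹ * κL⁻¹ * bS S := by rw [hebS]; linarith
  -- threshold inequality
  have hkey : ε⁻¹ * κL⁻¹ * bS S ≤ κL ^ 2 * (ε⁻¹ * γstar) * dS S := by
    by_cases hSG : (S ∩ Gω).Nonempty
    · have hd0 : 0 < dS S := by
        rcases (hdSnn S).lt_or_eq with h | h
        · exact h
        · exfalso
          rcases hident S hSG with ⟨e1, e2, hne⟩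
          have hz : dS S = 0 := h.symm
          rw [hdS] at hz
          have hterm0 : ∀ e ∈ Finset.univ,
              ω e * ∑ j, (βES e S j - ∑ e', ω e' * βES e' S j) ^ 2 = 0 :=
            (Finset.sum_eq_zero_iff_of_nonneg fun e _ =>
              mul_nonneg (hωnn e) (Finset.sum_nonneg fun j _ => sq_nonneg _)).mp hz
          have hcoord : ∀ e (j : Fin p), βES e S j = ∑ e', ω e' * βES e' S j := by
            intro e j
            have h1 := hterm0 e (Finset.mem_univ e)
            have h2 : ∑ j, (βES e S j - ∑ e', ω e' * βES e' S j) ^ 2 = 0 :=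
              (mul_eq_zero.mp h1).resolve_left (hω e).ne'
            have h3 := (Finset.sum_eq_zero_iff_of_nonneg
              fun j _ => sq_nonneg _).mp h2 j (Finset.mem_univ j)
            have h4 := pow_eq_zero_iff (n := 2) (by norm_num) |>.mp h3
            linarith
          exact hne (funext fun j => (hcoord e1 j).trans (hcoord e2 j).symm)
      have hsup : bS S / dS S
          ≤ sSup ((fun S => bS S / dS S) '' {S : Finset (Fin p) | (S ∩ Gω).Nonempty}) :=
        le_csSup ((Set.toFinite _).image _).bddAbove (Set.mem_image_of_mem _ hSG)
      have hss : κL ^ 3 * γstar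
          = sSup ((fun S => bS S / dS S) '' {S : Finset (Fin p) | (S ∩ Gω).Nonempty}) := by
        rw [hγstar]
        field_simp
      have hb : bS S ≤ κL ^ 3 * γstar * dS S := by
        rw [hss]
        exact (div_le_iff₀ hd0).mp hsup
      calc ε⁻¹ * κL⁻¹ * bS S
          ≤ ε⁻¹ * κL⁻¹ * (κL ^ 3 * γstar * dS S) := by
            refine mul_le_mul_of_nonneg_left hb ?_
            positivity
        _ = κL ^ 2 * (ε⁻¹ * γstar) * dS S := by
            field_simp
    · have hbS0 : bS S = 0 := by
        rw [hbS]
        refine Finset.sum_eq_zero fun j hj => ?_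
        have hj2 : j ∉ Gω := fun h => hSG ⟨j, Finset.mem_inter.2 ⟨hj, h⟩⟩
        have h0 : (∑ e, ω e * ∫ z, (z.2 - ∑ i, βs i * z.1 i) * z.1 j ∂(μ e)) = 0 := by
          by_contra h
          exact hj2 ((hG j).2 h)
        rw [h0]
        ring
      rw [hbS0, mul_zero]
      exact mul_nonneg (mul_nonneg (by positivity)
        (mul_nonneg (inv_nonneg.2 hε0.le) hγsnn)) (hdSnn S)
  -- assemble
  rw [hQ β γ, hQ βs γ, hJβs]
  have hγJ : γ * (κL ^ 2 * dS S) ≤ γ * J β := mul_le_mul_of_nonneg_left hJβ hγpos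
  nlinarith [hpool, hX, hkey, hγJ]
end

section
/- In the population EILLS objective, for β with support S and T = S* \ S, the invariance regularizer equals J(β; ω) = Σ_e ω^(e) ‖Σ_S^(e) (β^(e,S)_S − β_S)‖₂², where β^(e,S)_S = β*_S + (Σ_S^(e))⁻¹ { E[ε^(e) x_S^(e)] + Σ^(e)_{S,T} β*_T }. In particular, J(β; ω) = 0 if and only if β coincides with the population least-squares minimizer constrained to S simultaneously for every environment e ∈ E. -/
open MeasureTheory Matrix

lemma aux_int_mul {α : Type*} [MeasurableSpace α] {ν : Measure α} {f g : α → ℝ}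
    (hf : MemLp f 2 ν) (hg : MemLp g 2 ν) : Integrable (fun x => f x * g x) ν := by
  rw [← memLp_one_iff_integrable]
  have h : (1 : ENNReal)/1 = 1/2 + 1/2 := by
    rw [ENNReal.div_add_div_same, one_add_one_eq_two, ENNReal.div_self two_ne_zero ENNReal.ofNat_ne_top, div_one]
  exact hg.mul' (φ := f) (r := 1) hf

/-- For `β` with support `S` and `T = S* \ S`, the population invariance regularizer equals
`J(β;ω) = Σ_e ω⁽ᵉ⁾ ‖Σ_S⁽ᵉ⁾(β^{(e,S)}_S − β_S)‖₂²` with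
`β^{(e,S)}_S = β*_S + (Σ_S⁽ᵉ⁾)⁻¹{E[ε⁽ᵉ⁾x_S⁽ᵉ⁾] + Σ_{S,T}⁽ᵉ⁾β*_T}`; in particular
`J(β;ω) = 0` iff `β` is simultaneously the constrained population least-squares minimizer
on `S` for every environment. -/
theorem stmt11
    (p : ℕ) (ι : Type) [Fintype ι]
    (ω : ι → ℝ) (hω : ∀ e, 0 < ω e) (hωsum : ∑ e, ω e = 1)
    (μ : ι → Measure ((Fin p → ℝ) × ℝ)) (hprob : ∀ e, IsProbabilityMeasure (μ e))
    (hL2x : ∀ e i, MemLp (fun z : (Fin p → ℝ) × ℝ => z.1 i) 2 (μ e))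
    (hL2y : ∀ e, MemLp (fun z : (Fin p → ℝ) × ℝ => z.2) 2 (μ e))
    (βs : Fin p → ℝ)
    (Sge : ι → Matrix (Fin p) (Fin p) ℝ)
    (hSge : ∀ e i j, Sge e i j = ∫ z, z.1 i * z.1 j ∂(μ e))
    (hpd : ∀ e, (Sge e).PosDef)
    (S : Finset (Fin p)) (β : Fin p → ℝ) (hβ : ∀ j, β j ≠ 0 ↔ j ∈ S)
    (T : Finset (Fin p)) (hT : T = Finset.univ.filter fun j => βs j ≠ 0 ∧ j ∉ S)
    (J : ℝ)
    (hJ : J = ∑ j, (if β j ≠ 0 then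
        ∑ e, ω e * (∫ z, (z.2 - ∑ i, β i * z.1 i) * z.1 j ∂(μ e)) ^ 2 else 0))
    -- the constrained least-squares solutions, written in the coordinates of `S`
    (βESS : ι → ({j // j ∈ S} → ℝ))
    (hβESS : ∀ e, βESS e = (fun j => βs j.1) +
      ((Sge e).submatrix (Subtype.val : {j // j ∈ S} → Fin p) Subtype.val)⁻¹ *ᵥ
        (fun j : {j // j ∈ S} =>
          (∫ z, (z.2 - ∑ i, βs i * z.1 i) * z.1 j.1 ∂(μ e)) +
            ∑ t ∈ T, Sge e j.1 t * βs t)) :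
    (J = ∑ e, ω e * ∑ j : {j // j ∈ S},
        (((Sge e).submatrix (Subtype.val : {j // j ∈ S} → Fin p) Subtype.val *ᵥ
          (βESS e - fun j : {j // j ∈ S} => β j.1)) j) ^ 2) ∧
    (J = 0 ↔ ∀ e, ∀ b : Fin p → ℝ, (∀ j, j ∉ S → b j = 0) →
        ∫ z, (z.2 - ∑ i, β i * z.1 i) ^ 2 ∂(μ e) ≤
          ∫ z, (z.2 - ∑ i, b i * z.1 i) ^ 2 ∂(μ e)) := by
  classical
  -- gradient coordinates
  set G : ι → Fin p → ℝ :=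
    fun e j => ∫ z, (z.2 - ∑ i, β i * z.1 i) * z.1 j ∂(μ e) with hGdef
  -- residuals are in L²
  have hres : ∀ (e) (b : Fin p → ℝ),
      MemLp (fun z : (Fin p → ℝ) × ℝ => z.2 - ∑ i, b i * z.1 i) 2 (μ e) := by
    intro e b
    exact (hL2y e).sub (memLp_finset_sum Finset.univ fun i _ => (hL2x e i).const_mul (b i))
  have hintxx : ∀ e i j,
      Integrable (fun z : (Fin p → ℝ) × ℝ => z.1 i * z.1 j) (μ e) :=
    fun e i j => aux_int_mul (hL2x e i) (hL2x e j)
  have hintres : ∀ (e) (b : Fin p → ℝ) (j),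
      Integrable (fun z : (Fin p → ℝ) × ℝ => (z.2 - ∑ i, b i * z.1 i) * z.1 j) (μ e) :=
    fun e b j => aux_int_mul (hres e b) (hL2x e j)
  have hsymm : ∀ e i j, Sge e i j = Sge e j i := by
    intro e i j
    rw [hSge, hSge]
    exact integral_congr_ae (Filter.Eventually.of_forall fun z => mul_comm _ _)
  -- linearity of the gradient
  have hgrad : ∀ (e) (b c : Fin p → ℝ) (j),
      (∫ z, (z.2 - ∑ i, b i * z.1 i) * z.1 j ∂(μ e)) =
        (∫ z, (z.2 - ∑ i, c i * z.1 i) * z.1 j ∂(μ e)) + ∑ i, (c i - b i) * Sge e i j := by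
    intro e b c j
    have hpt : ∀ z : (Fin p → ℝ) × ℝ,
        (z.2 - ∑ i, b i * z.1 i) * z.1 j =
          (z.2 - ∑ i, c i * z.1 i) * z.1 j + ∑ i, (c i - b i) * (z.1 i * z.1 j) := by
      intro z
      have h3 : ∑ i, (c i - b i) * (z.1 i * z.1 j) =
          (∑ i, c i * z.1 i) * z.1 j - (∑ i, b i * z.1 i) * z.1 j := by
        rw [← sub_mul, ← Finset.sum_sub_distrib, Finset.sum_mul]
        exact Finset.sum_congr rfl fun i _ => by ring
      rw [h3]; ring
    calc (∫ z, (z.2 - ∑ i, b i * z.1 i) * z.1 j ∂(μ e))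
        = ∫ z, ((z.2 - ∑ i, c i * z.1 i) * z.1 j + ∑ i, (c i - b i) * (z.1 i * z.1 j)) ∂(μ e) :=
          integral_congr_ae (Filter.Eventually.of_forall hpt)
      _ = (∫ z, (z.2 - ∑ i, c i * z.1 i) * z.1 j ∂(μ e)) +
            ∫ z, (∑ i, (c i - b i) * (z.1 i * z.1 j)) ∂(μ e) := by
          exact integral_add (hintres e c j)
            (integrable_finset_sum _ fun i _ => ((hintxx e i j).const_mul _))
      _ = (∫ z, (z.2 - ∑ i, c i * z.1 i) * z.1 j ∂(μ e)) + ∑ i, (c i - b i) * Sge e i j := by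
          rw [integral_finset_sum _ fun i _ => ((hintxx e i j).const_mul _)]
          congr 1
          exact Finset.sum_congr rfl fun i _ => by rw [integral_const_mul, hSge]
  -- quadratic expansion of the risk
  have hquad : ∀ (e) (b : Fin p → ℝ),
      (∫ z, (z.2 - ∑ i, b i * z.1 i) ^ 2 ∂(μ e)) =
        (∫ z, (z.2 - ∑ i, β i * z.1 i) ^ 2 ∂(μ e))
          - 2 * ∑ j, (b j - β j) * G e j
          + ∑ j, (b j - β j) * ∑ i, (b i - β i) * Sge e i j := by
    intro e b
    have hpt : ∀ z : (Fin p → ℝ) × ℝ,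
        (z.2 - ∑ i, b i * z.1 i) ^ 2 =
          (z.2 - ∑ i, β i * z.1 i) ^ 2
            - 2 * ∑ j, (b j - β j) * ((z.2 - ∑ i, β i * z.1 i) * z.1 j)
            + ∑ j, (b j - β j) * ∑ i, (b i - β i) * (z.1 i * z.1 j) := by
      intro z
      have h1 : ∑ i, b i * z.1 i =
          (∑ i, β i * z.1 i) + ∑ i, (b i - β i) * z.1 i := by
        rw [← Finset.sum_add_distrib]
        exact Finset.sum_congr rfl fun i _ => by ring
      have h2 : ∑ j, (b j - β j) * ((z.2 - ∑ i, β i * z.1 i) * z.1 j) =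
          (z.2 - ∑ i, β i * z.1 i) * ∑ j, (b j - β j) * z.1 j := by
        rw [Finset.mul_sum]
        exact Finset.sum_congr rfl fun j _ => by ring
      have h3 : ∑ j, (b j - β j) * ∑ i, (b i - β i) * (z.1 i * z.1 j) =
          (∑ j, (b j - β j) * z.1 j) * (∑ i, (b i - β i) * z.1 i) := by
        rw [Finset.sum_mul_sum]
        refine Finset.sum_congr rfl fun j _ => ?_
        rw [Finset.mul_sum]
        exact Finset.sum_congr rfl fun i _ => by ring
      rw [h1, h2, h3]; ring
    calc (∫ z, (z.2 - ∑ i, b i * z.1 i) ^ 2 ∂(μ e))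
        = ∫ z, ((z.2 - ∑ i, β i * z.1 i) ^ 2
            - 2 * ∑ j, (b j - β j) * ((z.2 - ∑ i, β i * z.1 i) * z.1 j)
            + ∑ j, (b j - β j) * ∑ i, (b i - β i) * (z.1 i * z.1 j)) ∂(μ e) :=
          integral_congr_ae (Filter.Eventually.of_forall hpt)
      _ = (∫ z, (z.2 - ∑ i, β i * z.1 i) ^ 2 ∂(μ e))
          - 2 * ∑ j, (b j - β j) * G e j
          + ∑ j, (b j - β j) * ∑ i, (b i - β i) * Sge e i j := by
          have isq : Integrable (fun z : (Fin p → ℝ) × ℝ =>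
              (z.2 - ∑ i, β i * z.1 i) ^ 2) (μ e) := by
            have := aux_int_mul (hres e β) (hres e β)
            simpa [pow_two] using this
          have i2 : Integrable (fun z : (Fin p → ℝ) × ℝ =>
              2 * ∑ j, (b j - β j) * ((z.2 - ∑ i, β i * z.1 i) * z.1 j)) (μ e) :=
            (integrable_finset_sum _ fun j _ => (hintres e β j).const_mul _).const_mul 2
          have i3 : Integrable (fun z : (Fin p → ℝ) × ℝ =>
              ∑ j, (b j - β j) * ∑ i, (b i - β i) * (z.1 i * z.1 j)) (μ e) :=
            integrable_finset_sum _ fun j _ =>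
              ((integrable_finset_sum _ fun i _ => (hintxx e i j).const_mul _).const_mul _)
          have i12 : Integrable (fun z : (Fin p → ℝ) × ℝ =>
              (z.2 - ∑ i, β i * z.1 i) ^ 2 -
              2 * ∑ j, (b j - β j) * ((z.2 - ∑ i, β i * z.1 i) * z.1 j)) (μ e) := isq.sub i2
          have E2 : ∫ z, (∑ j, (b j - β j) * ((z.2 - ∑ i, β i * z.1 i) * z.1 j)) ∂(μ e)
              = ∑ j, (b j - β j) * G e j := by
            rw [integral_finset_sum _ fun j _ => (hintres e β j).const_mul _]
            exact Finset.sum_congr rfl fun j _ => integral_const_mul _ _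
          have E3 : ∫ z, (∑ j, (b j - β j) * ∑ i, (b i - β i) * (z.1 i * z.1 j)) ∂(μ e)
              = ∑ j, (b j - β j) * ∑ i, (b i - β i) * Sge e i j := by
            rw [integral_finset_sum _ fun j _ =>
              ((integrable_finset_sum _ fun i _ => (hintxx e i j).const_mul _).const_mul _)]
            refine Finset.sum_congr rfl fun j _ => ?_
            rw [integral_const_mul]
            congr 1
            rw [integral_finset_sum _ fun i _ => (hintxx e i j).const_mul _]
            exact Finset.sum_congr rfl fun i _ => by rw [integral_const_mul, hSge]
          rw [integral_add i12 i3, integral_sub isq i2, integral_const_mul, E2, E3]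
  -- submatrix on S
  set A : ι → Matrix {j // j ∈ S} {j // j ∈ S} ℝ :=
    fun e => (Sge e).submatrix (Subtype.val : {j // j ∈ S} → Fin p) Subtype.val with hAdef
  have hApos : ∀ e, (A e).PosDef := by
    intro e
    rw [posDef_iff_dotProduct_mulVec]
    constructor
    · ext i j
      simp only [A, Matrix.conjTranspose_apply, Matrix.submatrix_apply, star_trivial]
      exact hsymm e j.1 i.1
    · intro x hx
      set x' : Fin p → ℝ := fun i => if h : i ∈ S then x ⟨i, h⟩ else 0 with hx'def
      have hx'ne : x' ≠ 0 := by
        intro h0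
        apply hx
        funext i
        have := congrFun h0 i.1
        simpa [x', i.2] using this
      have key : dotProduct (star x) (A e *ᵥ x) = dotProduct (star x') (Sge e *ᵥ x') := by
        simp only [Matrix.mulVec, dotProduct, Pi.star_apply, star_trivial,
          Matrix.submatrix_apply, A]
        calc ∑ i : {j // j ∈ S}, x i * ∑ j : {j // j ∈ S}, Sge e i.1 j.1 * x j
            = ∑ i ∈ S.attach, x' i.1 * ∑ j ∈ S.attach, Sge e i.1 j.1 * x' j.1 := by
              rw [← Finset.univ_eq_attach]
              refine Finset.sum_congr rfl fun i _ => ?_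
              rw [hx'def]
              simp only [i.2, dif_pos]
              congr 1
              refine Finset.sum_congr rfl fun j _ => ?_
              simp only [j.2, dif_pos]
          _ = ∑ i ∈ S, x' i * ∑ j ∈ S, Sge e i j * x' j := by
              rw [← Finset.sum_attach S (fun i => x' i * ∑ j ∈ S, Sge e i j * x' j)]
              refine Finset.sum_congr rfl fun i _ => ?_
              congr 1
              exact Finset.sum_attach S (fun j => Sge e i.1 j * x' j)
          _ = ∑ i ∈ S, x' i * ∑ j, Sge e i j * x' j := by
              refine Finset.sum_congr rfl fun i _ => ?_
              congr 1
              exact Finset.sum_subset (Finset.subset_univ S) fun j _ hj => by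
                simp [hx'def, hj]
          _ = ∑ i, x' i * ∑ j, Sge e i j * x' j :=
              Finset.sum_subset (Finset.subset_univ S) fun i _ hi => by
                simp [hx'def, hi]
      rw [key]
      exact (hpd e).dotProduct_mulVec_pos hx'ne
  have hAinv : ∀ e, A e * (A e)⁻¹ = 1 :=
    fun e => Matrix.mul_nonsing_inv _ ((Matrix.isUnit_iff_isUnit_det _).mp (hApos e).isUnit)
  -- key identity: gradient coordinates on S are the matrix expression
  have hkey : ∀ (e) (j : {j // j ∈ S}),
      ((A e) *ᵥ (βESS e - fun j : {j // j ∈ S} => β j.1)) j = G e j.1 := by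
    intro e j
    have hdiff : βESS e - (fun j : {j // j ∈ S} => β j.1) =
        (fun j : {j // j ∈ S} => βs j.1 - β j.1) +
          (A e)⁻¹ *ᵥ (fun j : {j // j ∈ S} =>
            (∫ z, (z.2 - ∑ i, βs i * z.1 i) * z.1 j.1 ∂(μ e)) +
              ∑ t ∈ T, Sge e j.1 t * βs t) := by
      rw [hβESS e]
      funext i
      simp only [Pi.sub_apply, Pi.add_apply]
      ring
    rw [hdiff, Matrix.mulVec_add, Matrix.mulVec_mulVec, hAinv e, Matrix.one_mulVec,
      Pi.add_apply]
    have hmv : ((A e) *ᵥ fun j : {j // j ∈ S} => βs j.1 - β j.1) j =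
        ∑ i ∈ S, Sge e j.1 i * (βs i - β i) := by
      simp only [Matrix.mulVec, dotProduct, Matrix.submatrix_apply, A]
      rw [Finset.univ_eq_attach]
      exact Finset.sum_attach S (fun i => Sge e j.1 i * (βs i - β i))
    rw [hmv]
    simp only [hGdef]
    rw [hgrad e β βs j.1]
    have hsplit : ∑ i, (βs i - β i) * Sge e i j.1 =
        (∑ i ∈ S, Sge e j.1 i * (βs i - β i)) + ∑ t ∈ T, Sge e j.1 t * βs t := by
      have hdisj : Disjoint S T := by
        rw [hT]
        refine Finset.disjoint_left.mpr fun a haS haT => ?_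
        rcases Finset.mem_filter.mp haT with ⟨-, -, h2⟩
        exact h2 haS
      have hzero : ∀ i ∈ Finset.univ, i ∉ S ∪ T → (βs i - β i) * Sge e i j.1 = 0 := by
        intro i _ hi
        rcases Finset.notMem_union.mp hi with ⟨hiS, hiT⟩
        have hβi : β i = 0 := by
          by_contra hc; exact hiS ((hβ i).mp hc)
        have hβsi : βs i = 0 := by
          by_contra hc
          exact hiT (by rw [hT]; exact Finset.mem_filter.mpr ⟨Finset.mem_univ i, hc, hiS⟩)
        rw [hβi, hβsi]; ring
      rw [← Finset.sum_subset (Finset.subset_univ (S ∪ T)) hzero,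
        Finset.sum_union hdisj]
      congr 1
      · exact Finset.sum_congr rfl fun i _ => by rw [hsymm e i j.1]; ring
      · refine Finset.sum_congr rfl fun i hi => ?_
        have hiS : i ∉ S := by
          rw [hT] at hi; exact (Finset.mem_filter.mp hi).2.2
        have hβi : β i = 0 := by by_contra hc; exact hiS ((hβ i).mp hc)
        rw [hβi, hsymm e i j.1]; ring
    rw [hsplit]
    ring
  -- J as a sum over S
  have hJS : J = ∑ j ∈ S, ∑ e, ω e * (G e j) ^ 2 := by
    rw [hJ]
    calc ∑ j, (if β j ≠ 0 then ∑ e, ω e * (G e j) ^ 2 else 0)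
        = ∑ j, (if j ∈ S then ∑ e, ω e * (G e j) ^ 2 else 0) :=
          Finset.sum_congr rfl fun j _ => if_congr (hβ j) rfl rfl
      _ = ∑ j ∈ S, ∑ e, ω e * (G e j) ^ 2 := by
          rw [Finset.sum_ite_mem, Finset.univ_inter]
  -- first conjunct
  have conj1 : J = ∑ e, ω e * ∑ j : {j // j ∈ S},
      (((Sge e).submatrix (Subtype.val : {j // j ∈ S} → Fin p) Subtype.val *ᵥ
        (βESS e - fun j : {j // j ∈ S} => β j.1)) j) ^ 2 := by
    rw [hJS, Finset.sum_comm]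
    refine Finset.sum_congr rfl fun e _ => ?_
    rw [Finset.mul_sum]
    have : ∀ j : {j // j ∈ S},
        (((Sge e).submatrix (Subtype.val : {j // j ∈ S} → Fin p) Subtype.val *ᵥ
          (βESS e - fun j : {j // j ∈ S} => β j.1)) j) ^ 2 = (G e j.1) ^ 2 :=
      fun j => by rw [← hAdef] at *; rw [hkey e j]
    simp only [this]
    rw [Finset.univ_eq_attach]
    exact (Finset.sum_attach S fun j => ω e * (G e j) ^ 2).symm
  -- J = 0 iff all gradients vanish on S
  have hJ0 : J = 0 ↔ ∀ e, ∀ j ∈ S, G e j = 0 := by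
    rw [hJS]
    constructor
    · intro h e j hj
      have hnn : ∀ j ∈ S, (0:ℝ) ≤ ∑ e, ω e * (G e j) ^ 2 := fun j _ =>
        Finset.sum_nonneg fun e _ => mul_nonneg (hω e).le (sq_nonneg _)
      have h1 := (Finset.sum_eq_zero_iff_of_nonneg hnn).mp h j hj
      have h2 := (Finset.sum_eq_zero_iff_of_nonneg fun e _ =>
        mul_nonneg (hω e).le (sq_nonneg _)).mp h1 e (Finset.mem_univ e)
      rcases mul_eq_zero.mp h2 with h3 | h3
      · exact absurd h3 (hω e).ne'
      · exact pow_eq_zero_iff two_ne_zero |>.mp h3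
    · intro h
      refine Finset.sum_eq_zero fun j hj => Finset.sum_eq_zero fun e _ => ?_
      rw [h e j hj]
      ring
  refine ⟨conj1, hJ0.trans ⟨?_, ?_⟩⟩
  · -- gradients vanish → minimizer
    intro h e b hb
    have hzero : ∑ j, (b j - β j) * G e j = 0 := by
      refine Finset.sum_eq_zero fun j _ => ?_
      by_cases hj : j ∈ S
      · rw [h e j hj, mul_zero]
      · have hβj : β j = 0 := by by_contra hc; exact hj ((hβ j).mp hc)
        rw [hb j hj, hβj]
        ring
    have hq : (0:ℝ) ≤ ∑ j, (b j - β j) * ∑ i, (b i - β i) * Sge e i j := by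
      have hps := (hpd e).posSemidef
      have h0 := hps.dotProduct_mulVec_nonneg (fun j => b j - β j)
      have heq : dotProduct (star fun j => b j - β j)
          (Sge e *ᵥ fun j => b j - β j) =
          ∑ j, (b j - β j) * ∑ i, (b i - β i) * Sge e i j := by
        simp only [Matrix.mulVec, dotProduct, Pi.star_apply, star_trivial]
        refine Finset.sum_congr rfl fun j _ => ?_
        congr 1
        exact Finset.sum_congr rfl fun i _ => by rw [hsymm e i j]; ring
      rw [heq] at h0
      exact h0
    have hquadb := hquad e b
    linarith
  · -- minimizer → gradients vanish
    intro h e j hj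
    have hSjj : 0 < Sge e j j := by
      have hne : (Pi.single j 1 : Fin p → ℝ) ≠ 0 := by
        intro h0
        simpa using congrFun h0 j
      have h0 := (hpd e).dotProduct_mulVec_pos hne
      simpa [Matrix.mulVec_single, dotProduct, Pi.single_apply,
        Finset.sum_ite_eq'] using h0
    set c : ℝ := G e j / Sge e j j with hcdef
    have hbsupp : ∀ i, i ∉ S → β i + (Pi.single j c : Fin p → ℝ) i = 0 := by
      intro i hiS
      have hij : i ≠ j := fun hij => hiS (hij ▸ hj)
      have hβi : β i = 0 := by by_contra hc; exact hiS ((hβ i).mp hc)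
      rw [hβi, Pi.single_eq_of_ne hij]
      ring
    have hmin := h e (fun i => β i + (Pi.single j c : Fin p → ℝ) i) hbsupp
    have hq := hquad e (fun i => β i + (Pi.single j c : Fin p → ℝ) i)
    simp only [add_sub_cancel_left] at hq
    have hs1 : ∑ j', (Pi.single j c : Fin p → ℝ) j' * G e j' = c * G e j := by
      rw [Finset.sum_eq_single_of_mem j (Finset.mem_univ j)
        (fun i _ hi => by rw [Pi.single_eq_of_ne hi]; ring)]
      rw [Pi.single_eq_same]
    have hs2 : ∑ j', (Pi.single j c : Fin p → ℝ) j' * ∑ i, (Pi.single j c : Fin p → ℝ) i * Sge e i j' =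
        c * (c * Sge e j j) := by
      rw [Finset.sum_eq_single_of_mem j (Finset.mem_univ j)
        (fun i _ hi => by rw [Pi.single_eq_of_ne hi]; ring)]
      rw [Pi.single_eq_same]
      congr 1
      rw [Finset.sum_eq_single_of_mem j (Finset.mem_univ j)
        (fun i _ hi => by rw [Pi.single_eq_of_ne hi]; ring)]
      rw [Pi.single_eq_same]
    rw [hs1, hs2] at hq
    have hcS : c * Sge e j j = G e j := div_mul_cancel₀ _ hSjj.ne'
    have hle : c * G e j ≤ 0 := by
      rw [hcS] at hq
      linarith
    have hge : (0:ℝ) ≤ c * G e j := by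
      have : c * G e j = (G e j) ^ 2 / Sge e j j := by rw [hcdef]; ring
      rw [this]
      exact div_nonneg (sq_nonneg _) hSjj.le
    have : c * G e j = 0 := le_antisymm hle hge
    have h2 : (G e j) ^ 2 / Sge e j j = 0 := by
      rw [← this, hcdef]; ring
    field_simp at h2
    simpa using h2
end

section
/- If S* = U ∪ V with U ∩ V = ∅ and x_U^(e) is independent of x_V^(e) for every e ∈ E, then U is CE-invariant across E: E[y^(e) | x_U^(e)] = (β*_U)ᵀ x_U^(e) for all e, where β*_U is the restriction of β* to U. -/
open MeasureTheory ProbabilityTheory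

/-- If `S* = U ∪ V` with `U ∩ V = ∅`, `x_U⁽ᵉ⁾` independent of `x_V⁽ᵉ⁾`, `E[x_V⁽ᵉ⁾] = 0`
and `E[ε⁽ᵉ⁾ | x_{S*}⁽ᵉ⁾] = 0`, then `U` is CE-invariant across environments:
`E[y⁽ᵉ⁾ | x_U⁽ᵉ⁾] = (β*_U)ᵀx_U⁽ᵉ⁾` for every `e`. -/
theorem stmt13
    (p : ℕ) (ι : Type)
    (μ : ι → Measure ((Fin p → ℝ) × ℝ)) (hprob : ∀ e, IsProbabilityMeasure (μ e))
    (hL1y : ∀ e, Integrable (fun z : (Fin p → ℝ) × ℝ => z.2) (μ e))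
    (hL1x : ∀ e i, Integrable (fun z : (Fin p → ℝ) × ℝ => z.1 i) (μ e))
    (βs : Fin p → ℝ)
    (U V : Finset (Fin p)) (hUV : Disjoint U V)
    (hSstar : ∀ j, βs j ≠ 0 ↔ j ∈ U ∪ V)
    (hmean0 : ∀ e, ∀ j ∈ V, ∫ z, z.1 j ∂(μ e) = 0)
    (hCEeps : ∀ e, (μ e)[(fun z : (Fin p → ℝ) × ℝ => z.2 - ∑ i, βs i * z.1 i)|
        MeasurableSpace.comap
          (fun z : (Fin p → ℝ) × ℝ => fun j : {j // βs j ≠ 0} => z.1 j.1) inferInstance]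
      =ᵐ[μ e] fun _ => 0)
    (hindep : ∀ e, IndepFun (fun z : (Fin p → ℝ) × ℝ => fun j : {j // j ∈ U} => z.1 j.1)
        (fun z : (Fin p → ℝ) × ℝ => fun j : {j // j ∈ V} => z.1 j.1) (μ e)) :
    ∀ e, (μ e)[(fun z : (Fin p → ℝ) × ℝ => z.2)|MeasurableSpace.comap
        (fun z : (Fin p → ℝ) × ℝ => fun j : {j // j ∈ U} => z.1 j.1) inferInstance]
      =ᵐ[μ e] fun z => ∑ j ∈ U, βs j * z.1 j := by
  intro e
  haveI := hprob e
  set Ω := (Fin p → ℝ) × ℝ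
  set gU : Ω → ({j // j ∈ U} → ℝ) := fun z => fun j => z.1 j.1 with hgU
  set gV : Ω → ({j // j ∈ V} → ℝ) := fun z => fun j => z.1 j.1 with hgV
  set gS : Ω → ({j // βs j ≠ 0} → ℝ) := fun z => fun j => z.1 j.1 with hgS
  have hgUm : Measurable gU :=
    measurable_pi_lambda _ fun j => (measurable_pi_apply j.1).comp measurable_fst
  have hgVm : Measurable gV :=
    measurable_pi_lambda _ fun j => (measurable_pi_apply j.1).comp measurable_fst
  have hgSm : Measurable gS :=
    measurable_pi_lambda _ fun j => (measurable_pi_apply j.1).comp measurable_fst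
  have hmU : MeasurableSpace.comap gU inferInstance ≤ (inferInstance : MeasurableSpace Ω) :=
    hgUm.comap_le
  have hmV : MeasurableSpace.comap gV inferInstance ≤ (inferInstance : MeasurableSpace Ω) :=
    hgVm.comap_le
  have hmS : MeasurableSpace.comap gS inferInstance ≤ (inferInstance : MeasurableSpace Ω) :=
    hgSm.comap_le
  have hUS : MeasurableSpace.comap gU inferInstance ≤ MeasurableSpace.comap gS inferInstance := by
    have hfac : gU = (fun v : ({j // βs j ≠ 0} → ℝ) => fun j : {j // j ∈ U} =>
        v ⟨j.1, (hSstar j.1).mpr (Finset.mem_union_left V j.2)⟩) ∘ gS := rfl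
    rw [hfac, ← MeasurableSpace.comap_comp]
    exact MeasurableSpace.comap_mono
      ((measurable_pi_lambda _ fun j => measurable_pi_apply _).comap_le)
  haveI : SigmaFinite ((μ e).trim hmU) := inferInstance
  haveI : SigmaFinite ((μ e).trim hmS) := inferInstance
  -- the three pieces
  set fε : Ω → ℝ := fun z => z.2 - ∑ i, βs i * z.1 i with hfε
  set fU : Ω → ℝ := fun z => ∑ j ∈ U, βs j * z.1 j with hfU
  set fV : Ω → ℝ := fun z => ∑ j ∈ V, βs j * z.1 j with hfV
  have hintU : Integrable fU (μ e) :=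
    integrable_finset_sum _ fun j _ => (hL1x e j).const_mul _
  have hintV : Integrable fV (μ e) :=
    integrable_finset_sum _ fun j _ => (hL1x e j).const_mul _
  have hintε : Integrable fε (μ e) :=
    (hL1y e).sub (integrable_finset_sum _ fun i _ => (hL1x e i).const_mul _)
  -- decomposition
  have hdec : (fun z : Ω => z.2) = fε + (fU + fV) := by
    funext z
    have hsum : ∑ i, βs i * z.1 i = ∑ i ∈ U ∪ V, βs i * z.1 i := by
      refine (Finset.sum_subset (Finset.subset_univ _) fun i _ hi => ?_).symm
      have : βs i = 0 := by
        by_contra h; exact hi ((hSstar i).mp h)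
      simp [this]
    simp only [Pi.add_apply, hfε, hfU, hfV]
    rw [hsum, Finset.sum_union hUV]
    ring
  -- conditional expectation of ε given mU is 0
  have hcε : (μ e)[fε | MeasurableSpace.comap gU inferInstance] =ᵐ[μ e] fun _ => 0 := by
    have h1 := condExp_condExp_of_le hUS hmS (μ := μ e)
      (f := fε)
    refine (h1.symm.trans ?_)
    calc (μ e)[(μ e)[fε | MeasurableSpace.comap gS inferInstance]
          | MeasurableSpace.comap gU inferInstance]
        =ᵐ[μ e] (μ e)[(fun _ => 0 : Ω → ℝ) | MeasurableSpace.comap gU inferInstance] :=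
          condExp_congr_ae (hCEeps e)
      _ =ᵐ[μ e] fun _ => 0 := by
          rw [show (fun _ : Ω => (0 : ℝ)) = (0 : Ω → ℝ) from rfl, condExp_zero]
  -- conditional expectation of fU given mU is fU
  have hsmU : StronglyMeasurable[MeasurableSpace.comap gU inferInstance] fU := by
    have : fU = (fun v : {j // j ∈ U} → ℝ => ∑ j ∈ U.attach, βs j.1 * v j) ∘ gU := by
      funext z
      simp [hfU, hgU, Finset.sum_attach U (fun j => βs j * z.1 j)]
    rw [this]
    exact ((Finset.univ.measurable_sum fun j _ =>
      (measurable_pi_apply j).const_mul _).comp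
      (comap_measurable gU)).stronglyMeasurable
  have hcU : (μ e)[fU | MeasurableSpace.comap gU inferInstance] =ᵐ[μ e] fU :=
    Filter.EventuallyEq.of_eq (condExp_of_stronglyMeasurable hmU hsmU hintU)
  -- conditional expectation of fV given mU is constant 0
  have hsmV : StronglyMeasurable[MeasurableSpace.comap gV inferInstance] fV := by
    have : fV = (fun v : {j // j ∈ V} → ℝ => ∑ j ∈ V.attach, βs j.1 * v j) ∘ gV := by
      funext z
      simp [hfV, hgV, Finset.sum_attach V (fun j => βs j * z.1 j)]
    rw [this]
    exact ((Finset.univ.measurable_sum fun j _ =>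
      (measurable_pi_apply j).const_mul _).comp
      (comap_measurable gV)).stronglyMeasurable
  have hIVU : Indep (MeasurableSpace.comap gV inferInstance)
      (MeasurableSpace.comap gU inferInstance) (μ e) :=
    ((IndepFun_iff_Indep gU gV (μ e)).mp (hindep e)).symm
  have hcV : (μ e)[fV | MeasurableSpace.comap gU inferInstance]
      =ᵐ[μ e] fun _ => ∫ z, fV z ∂(μ e) :=
    condExp_indep_eq hmV hmU hsmV hIVU
  have hVint0 : ∫ z, fV z ∂(μ e) = 0 := by
    rw [hfV]
    rw [integral_finset_sum _ fun j _ => (hL1x e j).const_mul _]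
    refine Finset.sum_eq_zero fun j hj => ?_
    rw [integral_const_mul, hmean0 e j hj]
    ring
  -- combine
  have hadd1 : (μ e)[fε + (fU + fV) | MeasurableSpace.comap gU inferInstance]
      =ᵐ[μ e] (μ e)[fε | MeasurableSpace.comap gU inferInstance]
        + (μ e)[fU + fV | MeasurableSpace.comap gU inferInstance] :=
    condExp_add hintε (hintU.add hintV) _
  have hadd2 : (μ e)[fU + fV | MeasurableSpace.comap gU inferInstance]
      =ᵐ[μ e] (μ e)[fU | MeasurableSpace.comap gU inferInstance]
        + (μ e)[fV | MeasurableSpace.comap gU inferInstance] :=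
    condExp_add hintU hintV _
  rw [hdec]
  filter_upwards [hadd1, hadd2, hcε, hcU, hcV] with z h1 h2 h3 h4 h5
  simp only [Pi.add_apply] at *
  rw [h1, h2, h3, h4, h5, hVint0]
  simp [hfU]
end

section
/- For the two-environment linear SCM with heterogeneous noise variance, the bias difference between environments has the closed form: with M = W_{S,:} D W_{S,:}ᵀ, u_S = (Wα)_S, ι = u_Sᵀ M⁻¹ u_S, and ξ = 1 − u_Sᵀ M⁻¹ (W_{S,:} D W_{T,:}ᵀ) β*_T, the weighted variance d̄_S = (1/2)‖β^(1,S) − β^(2,S)‖₂² equals (1/2) ‖M⁻¹ u_S‖₂² · ξ² · | v₀^(1)/(1+ι v₀^(1)) − v₀^(2)/(1+ι v₀^(2)) |². -/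
open Matrix

private lemma vecMulVec_mulVec' {n : Type*} [Fintype n] (a b x : n → ℝ) :
    Matrix.vecMulVec a b *ᵥ x = (b ⬝ᵥ x) • a := by
  ext i
  simp only [Matrix.mulVec, dotProduct, Matrix.vecMulVec_apply, Pi.smul_apply,
    smul_eq_mul, Finset.sum_mul]
  exact Finset.sum_congr rfl fun j _ => by ring

private lemma vv_posSemidef {n : Type*} [Fintype n] (c : ℝ) (hc : 0 ≤ c) (a : n → ℝ) :
    (c • Matrix.vecMulVec a a).PosSemidef := by
  apply Matrix.PosSemidef.of_dotProduct_mulVec_nonneg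
  · ext i j
    simp [Matrix.conjTranspose_apply, Matrix.vecMulVec_apply, mul_comm]
  · intro x
    rw [Matrix.smul_mulVec, vecMulVec_mulVec', star_trivial]
    simp only [dotProduct_smul, smul_eq_mul]
    rw [dotProduct_comm]
    exact mul_nonneg hc (mul_self_nonneg _)

private lemma submatrix_triple {p : ℕ} (W D : Matrix (Fin p) (Fin p) ℝ) {ι κ : Type*}
    [Fintype ι] [Fintype κ] (f : ι → Fin p) (g : κ → Fin p) (j : ι) (t : κ) :
    (W.submatrix f id * D * (W.submatrix g id)ᵀ) j t = (W * D * Wᵀ) (f j) (g t) := by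
  simp [Matrix.mul_apply, Matrix.submatrix_apply, Matrix.transpose_apply]

/-- Closed form of the bias difference in the two-environment linear SCM with heterogeneous
noise variance: with `M = W_{S,:} D W_{S,:}ᵀ`, `u = Wα` (so `u_T = 0`), `ι = u_SᵀM⁻¹u_S` and
`ξ = 1 − u_SᵀM⁻¹(W_{S,:} D W_{T,:}ᵀ)β*_T`, the weighted variance
`d̄_S = ½‖β^{(1,S)} − β^{(2,S)}‖₂²` equals
`½‖M⁻¹u_S‖₂² · ξ² · |v₀⁽¹⁾/(1+ιv₀⁽¹⁾) − v₀⁽²⁾/(1+ιv₀⁽²⁾)|²`. -/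
theorem stmt15
    (p : ℕ) (W B D : Matrix (Fin p) (Fin p) ℝ) (α βs : Fin p → ℝ)
    (hD : D.PosDef)
    (hWunit : IsUnit (1 - B - Matrix.vecMulVec α βs).det)
    (hW : W = (1 - B - Matrix.vecMulVec α βs)⁻¹)
    (v0 : Fin 2 → ℝ) (hv0 : ∀ e, 0 < v0 e)
    (S T : Finset (Fin p))
    (hT : T = Finset.univ.filter fun j => βs j ≠ 0 ∧ j ∉ S)
    (u : Fin p → ℝ) (hu : u = W *ᵥ α)
    (huT : ∀ j ∈ T, u j = 0)
    (M : Matrix {j // j ∈ S} {j // j ∈ S} ℝ)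
    (hM : M = W.submatrix (Subtype.val : {j // j ∈ S} → Fin p) id * D *
      (W.submatrix (Subtype.val : {j // j ∈ S} → Fin p) id)ᵀ)
    (hMpd : M.PosDef)
    (uS : {j // j ∈ S} → ℝ) (huS : uS = fun j => u j.1)
    (iot : ℝ) (hiot : iot = uS ⬝ᵥ (M⁻¹ *ᵥ uS))
    (ξ : ℝ)
    (hξ : ξ = 1 - uS ⬝ᵥ (M⁻¹ *ᵥ ((W.submatrix (Subtype.val : {j // j ∈ S} → Fin p) id * D *
        (W.submatrix (Subtype.val : {j // j ∈ T} → Fin p) id)ᵀ) *ᵥ fun t : {j // j ∈ T} => βs t.1)))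
    (Sge : Fin 2 → Matrix (Fin p) (Fin p) ℝ)
    (hSge : ∀ e, Sge e = W * D * Wᵀ + v0 e • Matrix.vecMulVec u u)
    (βES : Fin 2 → ({j // j ∈ S} → ℝ))
    (hβES : ∀ e, βES e = (fun j => βs j.1) +
      ((Sge e).submatrix (Subtype.val : {j // j ∈ S} → Fin p) Subtype.val)⁻¹ *ᵥ
        ((v0 e • uS) + fun j : {j // j ∈ S} => ∑ t ∈ T, Sge e j.1 t * βs t)) :
    (1 / 2) * ∑ j : {j // j ∈ S}, (βES 0 j - βES 1 j) ^ 2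
      = (1 / 2) * (∑ j : {j // j ∈ S}, ((M⁻¹ *ᵥ uS) j) ^ 2) * ξ ^ 2 *
        (v0 0 / (1 + iot * v0 0) - v0 1 / (1 + iot * v0 1)) ^ 2 := by
  classical
  -- the common vector N = W_S D W_Tᵀ βs_T
  set N : {j // j ∈ S} → ℝ := fun j => ∑ t ∈ T, (W * D * Wᵀ) j.1 t * βs t with hN_def
  have hNvec : ((W.submatrix (Subtype.val : {j // j ∈ S} → Fin p) id * D *
        (W.submatrix (Subtype.val : {j // j ∈ T} → Fin p) id)ᵀ) *ᵥ
        fun t : {j // j ∈ T} => βs t.1) = N := by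
    ext j
    simp only [Matrix.mulVec, dotProduct, hN_def]
    rw [← Finset.sum_coe_sort T (fun t => (W * D * Wᵀ) j.1 t * βs t)]
    exact Finset.sum_congr rfl fun t _ => by rw [submatrix_triple]
  rw [hNvec] at hξ
  set q : ℝ := uS ⬝ᵥ (M⁻¹ *ᵥ N) with hq_def
  -- invertibility of M
  have hMdet : IsUnit M.det := hMpd.det_pos.ne'.isUnit
  have hMMinv : ∀ x, M *ᵥ (M⁻¹ *ᵥ x) = x := fun x => by
    rw [Matrix.mulVec_mulVec, Matrix.mul_nonsing_inv _ hMdet, Matrix.one_mulVec]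
  -- iota is nonnegative
  have hiotnn : 0 ≤ iot := by
    have h := (hMpd.inv).posSemidef.dotProduct_mulVec_nonneg uS
    rwa [star_trivial, ← hiot] at h
  have hden : ∀ e : Fin 2, (0 : ℝ) < 1 + iot * v0 e := by
    intro e
    have := hv0 e
    nlinarith [mul_nonneg hiotnn this.le]
  -- coefficients and solution vectors
  set c : Fin 2 → ℝ := fun e => v0 e * ξ / (1 + iot * v0 e) with hc_def
  set y : Fin 2 → ({j // j ∈ S} → ℝ) :=
    fun e => M⁻¹ *ᵥ N + c e • (M⁻¹ *ᵥ uS) with hy_def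
  -- each Ae = M + v0 e • uS uSᵀ maps y e to the right-hand side
  have hAe : ∀ e : Fin 2,
      (M + v0 e • Matrix.vecMulVec uS uS) *ᵥ y e = (v0 e • uS) + N := by
    intro e
    have hc : c e * (1 + iot * v0 e) = v0 e * ξ := by
      rw [hc_def]
      exact div_mul_cancel₀ _ (hden e).ne'
    have hdot : uS ⬝ᵥ y e = q + c e * iot := by
      rw [hy_def]
      simp only [dotProduct_add, dotProduct_smul, smul_eq_mul, ← hq_def, ← hiot]
    rw [Matrix.add_mulVec, Matrix.smul_mulVec, vecMulVec_mulVec', hdot]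
    have hMy : M *ᵥ y e = N + c e • uS := by
      rw [hy_def, Matrix.mulVec_add, Matrix.mulVec_smul, hMMinv, hMMinv]
    rw [hMy]
    ext j
    simp only [Pi.add_apply, Pi.smul_apply, smul_eq_mul]
    linear_combination uS j * hc + uS j * v0 e * hξ
  -- positive definiteness hence invertibility of Ae
  have hApd : ∀ e : Fin 2, (M + v0 e • Matrix.vecMulVec uS uS).PosDef := fun e =>
    hMpd.add_posSemidef (vv_posSemidef (v0 e) (hv0 e).le uS)
  -- the submatrix of Sge e
  have hsub : ∀ e : Fin 2, (Sge e).submatrix (Subtype.val : {j // j ∈ S} → Fin p) Subtype.val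
      = M + v0 e • Matrix.vecMulVec uS uS := by
    intro e
    ext j k
    rw [hSge]
    simp only [Matrix.submatrix_apply, Matrix.add_apply, Matrix.smul_apply,
      Matrix.vecMulVec_apply, smul_eq_mul, huS]
    congr 1
    rw [hM]
    rw [submatrix_triple]
  -- identify βES
  have hβ : ∀ e : Fin 2, βES e = (fun j => βs j.1) + y e := by
    intro e
    rw [hβES e]
    congr 1
    have hN' : (fun j : {j // j ∈ S} => ∑ t ∈ T, Sge e j.1 t * βs t) = N := by
      funext j
      rw [hN_def]
      apply Finset.sum_congr rfl
      intro t ht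
      rw [hSge]
      simp [Matrix.add_apply, Matrix.smul_apply, Matrix.vecMulVec_apply, huT t ht]
    rw [hsub e, hN']
    have hdet := (hApd e).det_pos.ne'.isUnit
    calc (M + v0 e • Matrix.vecMulVec uS uS)⁻¹ *ᵥ (v0 e • uS + N)
        = (M + v0 e • Matrix.vecMulVec uS uS)⁻¹ *ᵥ
            ((M + v0 e • Matrix.vecMulVec uS uS) *ᵥ y e) := by rw [hAe e]
      _ = y e := by
          rw [Matrix.mulVec_mulVec, Matrix.nonsing_inv_mul _ hdet, Matrix.one_mulVec]
  -- conclude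
  have hdiff : ∀ j, βES 0 j - βES 1 j = (c 0 - c 1) * (M⁻¹ *ᵥ uS) j := by
    intro j
    rw [hβ 0, hβ 1, hy_def]
    simp only [Pi.add_apply, Pi.smul_apply, smul_eq_mul]
    ring
  have hcc : c 0 - c 1 = ξ * (v0 0 / (1 + iot * v0 0) - v0 1 / (1 + iot * v0 1)) := by
    rw [hc_def]
    ring
  calc (1 / 2) * ∑ j : {j // j ∈ S}, (βES 0 j - βES 1 j) ^ 2
      = (1 / 2) * ∑ j : {j // j ∈ S}, (c 0 - c 1) ^ 2 * ((M⁻¹ *ᵥ uS) j) ^ 2 := by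
        congr 1
        exact Finset.sum_congr rfl fun j _ => by rw [hdiff j]; ring
    _ = (1 / 2) * ((c 0 - c 1) ^ 2 * ∑ j : {j // j ∈ S}, ((M⁻¹ *ᵥ uS) j) ^ 2) := by
        congr 1
        rw [Finset.mul_sum]
    _ = (1 / 2) * (∑ j : {j // j ∈ S}, ((M⁻¹ *ᵥ uS) j) ^ 2) * ξ ^ 2 *
        (v0 0 / (1 + iot * v0 0) - v0 1 / (1 + iot * v0 1)) ^ 2 := by
        rw [hcc]; ring
end
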